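/- Let m, n ∈ ℕ with m ≥ 1, let a_{rk} (1 ≤ r ≤ m, 1 ≤ k ≤ n) be real numbers, and let λ_1, …, λ_n be positive reals. Let a = (a_{1k})_{k=1}^n ∈ ℝ^n, let C be the n×n matrix with entries C_{kr} = ∑_{s=2}^m a_{sk} a_{sr} (the Gram matrix of the columns g_k = (a_{2k}, …, a_{mk}) ∈ ℝ^{m−1}), and let C(λ) = diag(λ_1, …, λ_n) + C. Define y_r = (a_{rk}/√λ_k)_{k=1}^n ∈ ℝ^n for 1 ≤ r ≤ m. Then (C(λ)⁻¹ a, a) = det(I_m + γ(y_1, y_2, …, y_m)) / det(I_{m−1} + γ(y_2, …, y_m)) − 1. -/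

import Mathlib

/-!
Put `S = diag(√λ₁, …, √λₙ)` and let `B` be the matrix with rows `y₂, …, y_m`. Then
`C(λ) = S (I + BᵀB) S` and `a = S y₁`, so the left side is `y₁ᵀ (I + BᵀB)⁻¹ y₁`.
By the Weinstein–Aronszajn identity `det(I + XXᵀ) = det(I + XᵀX)`, the denominator is
`det(I + BᵀB)` and the numerator is `det(I + BᵀB + y₁y₁ᵀ)`; the matrix determinant lemma
evaluates the latter as `det(I + BᵀB) (1 + y₁ᵀ (I + BᵀB)⁻¹ y₁)`.
-/

open Matrix Finset

namespace Matrix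

variable {m n R : Type*} [CommRing R]

theorem transpose_mul_self_eq_vecMulVec_add {p : ℕ} (Y : Matrix (Fin (p + 1)) n R) :
    Yᵀ * Y = vecMulVec (Y 0) (Y 0) + (Y.submatrix Fin.succ id)ᵀ * Y.submatrix Fin.succ id := by
  ext k r
  simp [mul_apply, Fin.sum_univ_succ, vecMulVec_apply]

variable [Fintype m] [Fintype n] [DecidableEq n]

theorem det_add_vecMulVec {A : Matrix n n R} (hA : IsUnit A.det) (u v : n → R) :
    (A + vecMulVec u v).det = A.det * (1 + v ⬝ᵥ A⁻¹ *ᵥ u) := by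
  rw [vecMulVec_eq Unit, det_add_replicateCol_mul_replicateRow hA,
    det_unique (1 + _), add_apply, one_apply_eq, ← replicateRow_vecMul,
    replicateRow_mul_replicateCol_apply, dotProduct_mulVec]

theorem det_one_add_mul_transpose_fin_succ {p : ℕ} (Y : Matrix (Fin (p + 1)) n R)
    (hY : IsUnit (1 + (Y.submatrix Fin.succ id)ᵀ * Y.submatrix Fin.succ id).det) :
    det (1 + Y * Yᵀ) = det (1 + (Y.submatrix Fin.succ id)ᵀ * Y.submatrix Fin.succ id) *
      (1 + Y 0 ⬝ᵥ (1 + (Y.submatrix Fin.succ id)ᵀ * Y.submatrix Fin.succ id)⁻¹ *ᵥ Y 0) := by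
  rw [det_one_add_mul_comm, transpose_mul_self_eq_vecMulVec_add, add_comm (vecMulVec _ _),
    ← add_assoc, det_add_vecMulVec hY]

theorem diagonal_mul_one_add_transpose_mul_self_mul_diagonal (s : n → R) (B : Matrix m n R) :
    diagonal s * (1 + Bᵀ * B) * diagonal s =
      diagonal (s * s) + (B * diagonal s)ᵀ * (B * diagonal s) := by
  rw [Matrix.mul_add, Matrix.add_mul, Matrix.mul_one, diagonal_mul_diagonal, transpose_mul,
    diagonal_transpose, Matrix.mul_assoc, Matrix.mul_assoc, Matrix.mul_assoc]
  rfl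

theorem inv_transpose_mul_mul_mulVec_dotProduct {D : Matrix n n R} (hD : IsUnit D.det)
    (M : Matrix n n R) (v : n → R) :
    ((Dᵀ * M * D)⁻¹ *ᵥ (Dᵀ *ᵥ v)) ⬝ᵥ (Dᵀ *ᵥ v) = (M⁻¹ *ᵥ v) ⬝ᵥ v := by
  have hDt : IsUnit Dᵀ.det := by rwa [det_transpose]
  rw [Matrix.mul_inv_rev, Matrix.mul_inv_rev, dotProduct_mulVec, vecMul_transpose, mulVec_mulVec,
    mulVec_mulVec, mul_nonsing_inv_cancel_left D _ hD, nonsing_inv_mul_cancel_right _ _ hDt]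

end Matrix

/-- General `m`: write `m = p + 1 ≥ 1` and index the rows `a_1, …, a_m` by `Fin (p + 1)`
(so `a 0` is the first row).  With `C` the Gram matrix of the columns
`g_k = (a_{2k}, …, a_{mk}) ∈ ℝ^{m−1}`, i.e. `C_{kr} = ∑_{s=2}^m a_{sk} a_{sr}`,
`C(λ) = diag(λ) + C` (`λₖ > 0`), and `y_r = (a_{rk}/√λₖ)ₖ` for `1 ≤ r ≤ m`, one has
`(C(λ)⁻¹ a₁, a₁) = det(I_m + γ(y₁, …, y_m)) / det(I_{m−1} + γ(y₂, …, y_m)) − 1`. -/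
theorem inv_quadratic_form_eq_det_ratio_sub_one {p n : ℕ} (a : Fin (p + 1) → Fin n → ℝ)
    (l : Fin n → ℝ) (hl : ∀ k, 0 < l k)
    (y : Fin (p + 1) → Fin n → ℝ)
    (hy : y = fun r k => a r k / Real.sqrt (l k)) :
    ((Matrix.diagonal l +
          Matrix.of fun k r : Fin n => ∑ s : Fin p, a s.succ k * a s.succ r)⁻¹ *ᵥ a 0)
        ⬝ᵥ a 0 =
      (Matrix.det (1 + Matrix.of fun i j : Fin (p + 1) => y i ⬝ᵥ y j)) /
        (Matrix.det (1 + Matrix.of fun i j : Fin p => y i.succ ⬝ᵥ y j.succ)) - 1 := by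
  set s : Fin n → ℝ := fun k => √(l k)
  have hs : ∀ k, 0 < s k := fun k => Real.sqrt_pos.mpr (hl k)
  obtain rfl : a = of y * diagonal s := by
    ext r k
    simp [hy, s, (hs k).ne']
  set B := (of y).submatrix Fin.succ id
  have hMdet : IsUnit (1 + Bᵀ * B).det := (isUnit_iff_isUnit_det _).mp <|
    (PosDef.one.add_posSemidef (by simpa using posSemidef_conjTranspose_mul_self B)).isUnit
  have hSdet : IsUnit (diagonal s).det := by
    simp [isUnit_iff_ne_zero, Finset.prod_ne_zero_iff, (hs _).ne']
  have hC : diagonal l + of (fun k r => ∑ i : Fin p,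
      (of y * diagonal s) i.succ k * (of y * diagonal s) i.succ r) =
      (diagonal s)ᵀ * (1 + Bᵀ * B) * diagonal s := by
    rw [diagonal_transpose, diagonal_mul_one_add_transpose_mul_self_mul_diagonal]
    congr 2
    funext k
    exact (Real.mul_self_sqrt (hl k).le).symm
  have ha : (of y * diagonal s) 0 = (diagonal s)ᵀ *ᵥ y 0 := by
    ext k
    simp [mulVec_diagonal, mul_comm]
  have hnum : of (fun i j => y i ⬝ᵥ y j) = of y * (of y)ᵀ := rfl
  have hden : of (fun i j : Fin p => y i.succ ⬝ᵥ y j.succ) = B * Bᵀ := rfl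
  rw [hC, ha, inv_transpose_mul_mul_mulVec_dotProduct hSdet, hnum, hden,
    det_one_add_mul_transpose_fin_succ _ hMdet, det_one_add_mul_comm B,
    mul_div_cancel_left₀ _ hMdet.ne_zero, add_sub_cancel_left, dotProduct_comm]
  rfl
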